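/- For any two maximum spanning trees S and T of a connected weighted graph G and any edge s in E(S) \ E(T), there exists an edge t in E(T) \ E(S) such that both S - s + t and T - t + s are maximum spanning trees of G. -/

import Mathlib

/-!
Removing `s = s(a, b)` from `S` leaves two components, one containing `a` and one containing `b`.
The path from `a` to `b` in `T` crosses from the first to the second along an edge `t`, which is
therefore not in `S`, and `S - s + t` is a tree. As `t` lies on the unique `T`-path from `a` to `b`,
deleting it separates `a` from `b` in `T`, so `T - t + s` is a tree as well. Maximality of `S` and of
`T` then gives `w t ≤ w s ≤ w t`, so both exchanges keep the maximum weight.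
-/

/-- `E'` is (the edge set of) a spanning tree of `G`. -/
def IsSpanningTree {V : Type*} (G : SimpleGraph V) (E' : Finset (Sym2 V)) : Prop :=
  (E' : Set (Sym2 V)) ⊆ G.edgeSet ∧ (SimpleGraph.fromEdgeSet (E' : Set (Sym2 V))).IsTree

/-- `E'` is a maximum spanning tree of `G` with respect to the weights `w`. -/
def IsMaxSpanningTree {V : Type*} (G : SimpleGraph V) (w : Sym2 V → ℝ)
    (E' : Finset (Sym2 V)) : Prop :=
  IsSpanningTree G E' ∧
    ∀ E'' : Finset (Sym2 V), IsSpanningTree G E'' → ∑ e ∈ E'', w e ≤ ∑ e ∈ E', w e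

open Finset SimpleGraph

theorem Finset.sum_insert_erase {α β : Type*} [DecidableEq α] [AddCommGroup β]
    {s : Finset α} {a b : α} (ha : a ∈ s) (hb : b ∉ s) (f : α → β) :
    ∑ x ∈ insert b (s.erase a), f x = ∑ x ∈ s, f x - f a + f b := by
  rw [sum_insert (fun h => hb (mem_of_mem_erase h)), sum_erase_eq_sub ha, add_comm]

namespace SimpleGraph

variable {V : Type*} {G : SimpleGraph V}

theorem Preconnected.reachable_deleteEdges_or (hG : G.Preconnected) (a b v : V) :
    (G.deleteEdges {s(a, b)}).Reachable a v ∨ (G.deleteEdges {s(a, b)}).Reachable b v := by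
  induction (reachable_iff_reflTransGen a v).1 (hG a v) with
  | refl => exact Or.inl .rfl
  | @tail u v _ huv ih =>
    by_cases he : s(u, v) = s(a, b)
    · rcases Sym2.eq_iff.1 he with ⟨-, rfl⟩ | ⟨-, rfl⟩
      · exact Or.inr .rfl
      · exact Or.inl .rfl
    · have hadj : (G.deleteEdges {s(a, b)}).Adj u v := by simp [huv, he]
      exact ih.imp (·.trans hadj.reachable) (·.trans hadj.reachable)

theorem IsTree.sup_edge_deleteEdges (hG : G.IsTree) {a b x y : V}
    (hxy : ¬ (G.deleteEdges {s(a, b)}).Reachable x y) :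
    (G.deleteEdges {s(a, b)} ⊔ edge x y).IsTree := by
  set G' := G.deleteEdges {s(a, b)}
  refine ⟨?_, (hG.isAcyclic.anti (deleteEdges_le _)).sup_edge_of_not_reachable hxy⟩
  have hle : G' ≤ G' ⊔ edge x y := le_sup_left
  have hcover := hG.connected.preconnected.reachable_deleteEdges_or a b
  have hxy' : (G' ⊔ edge x y).Reachable x y :=
    Adj.reachable (Or.inr ((edge_adj ..).2 ⟨Or.inl ⟨rfl, rfl⟩, fun h => hxy (h ▸ .rfl)⟩))
  have hab : (G' ⊔ edge x y).Reachable a b := by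
    rcases hcover x with hx | hx <;> rcases hcover y with hy | hy
    · exact absurd (hx.symm.trans hy) hxy
    · exact (hx.mono hle).trans (hxy'.trans (hy.mono hle).symm)
    · exact (hy.mono hle).trans (hxy'.symm.trans (hx.mono hle).symm)
    · exact absurd (hx.symm.trans hy) hxy
  refine (connected_iff_exists_forall_reachable _).2 ⟨a, fun v => ?_⟩
  rcases hcover v with hv | hv
  · exact hv.mono hle
  · exact hab.trans (hv.mono hle)

theorem IsAcyclic.not_reachable_deleteEdges_of_mem_edges (hG : G.IsAcyclic) {a b : V}
    {p : G.Walk a b} (hp : p.IsPath) {e : Sym2 V} (he : e ∈ p.edges) :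
    ¬ (G.deleteEdges {e}).Reachable a b := by
  classical
  rintro ⟨q⟩
  have hpq : p = (q.mapLe (deleteEdges_le _)).bypass :=
    congrArg Subtype.val ((hG.subsingleton_path a b).elim ⟨p, hp⟩ ⟨_, Walk.bypass_isPath _⟩)
  rw [hpq] at he
  have he' := q.edges_subset_edgeSet (by simpa using Walk.edges_bypass_subset_edges _ he)
  simp at he'

theorem IsTree.exists_exchange {S T : SimpleGraph V} (hS : S.IsTree) (hT : T.IsTree)
    {e : Sym2 V} (heS : e ∈ S.edgeSet) (heT : e ∉ T.edgeSet) :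
    ∃ f ∈ T.edgeSet, f ∉ S.edgeSet ∧ (S.deleteEdges {e} ⊔ fromEdgeSet {f}).IsTree ∧
      (T.deleteEdges {f} ⊔ fromEdgeSet {e}).IsTree := by
  classical
  induction e using Sym2.ind with | _ a b => ?_
  set S' := S.deleteEdges {s(a, b)}
  have hab : ¬ S'.Reachable a b := isAcyclic_iff_forall_isBridge.1 hS.isAcyclic heS
  obtain ⟨p, hp⟩ := (hT.connected.preconnected a b).some.toPath
  obtain ⟨⟨⟨x, y⟩, hxyT⟩, hd, hx, hy⟩ := p.exists_boundary_dart {v | S'.Reachable a v} .rfl hab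
  have hxy : ¬ S'.Reachable x y := fun h => hy (hx.trans h)
  refine ⟨s(x, y), hxyT, fun hxyS => hxy ?_, hS.sup_edge_deleteEdges hxy,
    hT.sup_edge_deleteEdges ?_⟩
  · exact Adj.reachable ((deleteEdges_adj ..).2
      ⟨hxyS, fun h => heT (Set.mem_singleton_iff.1 h ▸ hxyT)⟩)
  · exact hT.isAcyclic.not_reachable_deleteEdges_of_mem_edges hp (List.mem_map_of_mem hd)

theorem fromEdgeSet_insert_erase [DecidableEq V] (E : Finset (Sym2 V)) (e f : Sym2 V) :
    fromEdgeSet (insert f (E.erase e) : Finset (Sym2 V)) =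
      (fromEdgeSet E).deleteEdges {e} ⊔ fromEdgeSet {f} := by
  rw [deleteEdges_fromEdgeSet, ← fromEdgeSet_union]
  congr 1
  ext
  simp

end SimpleGraph

section SpanningTree

variable {V : Type*} {G : SimpleGraph V} {E : Finset (Sym2 V)}

theorem IsSpanningTree.edgeSet_fromEdgeSet (hE : IsSpanningTree G E) :
    (fromEdgeSet (E : Set (Sym2 V))).edgeSet = E := by
  rw [SimpleGraph.edgeSet_fromEdgeSet, sdiff_eq_left, Set.disjoint_left]
  exact fun e he => G.not_isDiag_of_mem_edgeSet (hE.1 he)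

theorem isSpanningTree_insert_erase [DecidableEq V] {e f : Sym2 V}
    (hE : (E : Set (Sym2 V)) ⊆ G.edgeSet) (hf : f ∈ G.edgeSet)
    (htree : ((fromEdgeSet (E : Set (Sym2 V))).deleteEdges {e} ⊔ fromEdgeSet {f}).IsTree) :
    IsSpanningTree G (insert f (E.erase e)) := by
  refine ⟨?_, by rwa [fromEdgeSet_insert_erase]⟩
  rw [coe_insert, Set.insert_subset_iff]
  exact ⟨hf, (coe_subset.2 (erase_subset e E)).trans hE⟩

variable [DecidableEq V] {w : Sym2 V → ℝ} {e f : Sym2 V}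

theorem IsMaxSpanningTree.weight_le_of_exchange (hE : IsMaxSpanningTree G w E) (he : e ∈ E)
    (hf : f ∉ E) (h : IsSpanningTree G (insert f (E.erase e))) : w f ≤ w e := by
  have := hE.2 _ h
  rw [sum_insert_erase he hf] at this
  linarith

theorem IsMaxSpanningTree.insert_erase (hE : IsMaxSpanningTree G w E) (he : e ∈ E)
    (hf : f ∉ E) (h : IsSpanningTree G (insert f (E.erase e))) (hw : w e ≤ w f) :
    IsMaxSpanningTree G w (insert f (E.erase e)) := by
  refine ⟨h, fun E' hE' => ?_⟩
  rw [sum_insert_erase he hf]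
  linarith [hE.2 E' hE']

end SpanningTree

theorem maxSpanningTree_exchange_general {V : Type*} [DecidableEq V]
    (G : SimpleGraph V) (w : Sym2 V → ℝ)
    (ES ET : Finset (Sym2 V))
    (hS : IsMaxSpanningTree G w ES) (hT : IsMaxSpanningTree G w ET)
    (s : Sym2 V) (hs : s ∈ ES \ ET) :
    ∃ t ∈ ET \ ES,
      IsMaxSpanningTree G w (insert t (ES.erase s)) ∧
      IsMaxSpanningTree G w (insert s (ET.erase t)) := by
  obtain ⟨hsS, hsT⟩ := mem_sdiff.1 hs
  obtain ⟨t, htT, htS, hS', hT'⟩ := hS.1.2.exists_exchange hT.1.2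
    (by rwa [hS.1.edgeSet_fromEdgeSet]) (by rwa [hT.1.edgeSet_fromEdgeSet])
  rw [hT.1.edgeSet_fromEdgeSet] at htT
  rw [hS.1.edgeSet_fromEdgeSet] at htS
  have h₁ := isSpanningTree_insert_erase hS.1.1 (hT.1.1 htT) hS'
  have h₂ := isSpanningTree_insert_erase hT.1.1 (hS.1.1 hsS) hT'
  exact ⟨t, mem_sdiff.2 ⟨htT, htS⟩,
    hS.insert_erase hsS htS h₁ (hT.weight_le_of_exchange htT hsT h₂),
    hT.insert_erase htT hsT h₂ (hS.weight_le_of_exchange hsS htS h₁)⟩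

/-- For maximum spanning trees `S`, `T` of a connected weighted graph
and any edge `s ∈ E(S) \ E(T)`, there is an edge `t ∈ E(T) \ E(S)` such that both
`S - s + t` and `T - t + s` are maximum spanning trees. -/
theorem maxSpanningTree_exchange {V : Type*} [DecidableEq V]
    (G : SimpleGraph V) (hG : G.Connected) (w : Sym2 V → ℝ)
    (ES ET : Finset (Sym2 V))
    (hS : IsMaxSpanningTree G w ES) (hT : IsMaxSpanningTree G w ET)
    (s : Sym2 V) (hs : s ∈ ES \ ET) :
    ∃ t ∈ ET \ ES,
      IsMaxSpanningTree G w (insert t (ES.erase s)) ∧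
      IsMaxSpanningTree G w (insert s (ET.erase t)) :=
  maxSpanningTree_exchange_general G w ES ET hS hT s hs
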